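/- arXiv:1104.0720 — 6 statements merged into one kernel-verified Lean document; each statement's English description precedes it below -/
import Mathlib

section
/- Let d ≥ 1 be an integer, σ > 0, and s < 1 − d/2. Let (g_k)_{k ∈ ℤ^d} be a family of independent real centered Gaussian random variables with Var(g_k) ≤ σ²/(2(1 + ‖k‖²)) for every k. Then the random series ∑_{k ∈ ℤ^d} (1 + ‖k‖²)^s g_k² is finite almost surely. -/
/-!
Tonelli gives `E ∑ₖ (1 + ‖k‖²)^s g_k² = ∑ₖ (1 + ‖k‖²)^s Var g_k ≤ σ²/2 ∑ₖ (1 + ‖k‖²)^(s-1)`,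
and the lattice sum converges because `s - 1 < -d/2`: bounding `(1 + ‖k‖²)^d` below by
`∏ᵢ (1 + kᵢ²)` reduces it to the `d`-th power of the one-dimensional sum `∑ₙ (1 + n²)^((s-1)/d)`.
A nonnegative series with finite expectation is finite almost surely.
-/

open MeasureTheory ProbabilityTheory
open scoped ENNReal NNReal

theorem summable_one_add_sq_rpow {q : ℝ} (hq : q < -(1 / 2)) :
    Summable fun n : ℤ => (1 + (n : ℝ) ^ 2) ^ q := by
  refine (Real.summable_abs_int_rpow (b := -(2 * q)) (by linarith)).of_norm_bounded_eventually ?_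
  filter_upwards [(Set.finite_singleton (0 : ℤ)).compl_mem_cofinite] with n hn
  have hn : (n : ℝ) ≠ 0 := by simpa using hn
  rw [Real.norm_of_nonneg (by positivity), neg_neg, Real.rpow_mul (abs_nonneg _),
    Real.rpow_two, sq_abs]
  exact Real.rpow_le_rpow_of_nonpos (by positivity) (by linarith) (by linarith)

theorem summable_fin_pi_prod_of_nonneg {α : Type*} {f : α → ℝ} (hf : Summable f)
    (hf₀ : 0 ≤ f) :
    ∀ n : ℕ, Summable fun k : Fin n → α => ∏ i, f (k i)
  | 0 => .of_finite
  | n + 1 => by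
    have hprod : Summable fun x : α × (Fin n → α) => f x.1 * ∏ i, f (x.2 i) :=
      hf.mul_of_nonneg (g := fun k : Fin n → α => ∏ i, f (k i))
        (summable_fin_pi_prod_of_nonneg hf hf₀ n) hf₀ fun k => Finset.prod_nonneg fun i _ => hf₀ _
    refine (hprod.comp_injective (Fin.consEquiv fun _ => α).symm.injective).congr fun k => ?_
    simp [Fin.consEquiv, Fin.prod_univ_succ, Fin.tail]

theorem one_add_sum_sq_rpow_le_prod {d : ℕ} (hd : 0 < d) {p : ℝ} (hp : p ≤ 0) (x : Fin d → ℝ) :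
    (1 + ∑ i, x i ^ 2) ^ p ≤ ∏ i, (1 + x i ^ 2) ^ (p / d) := by
  have hprod : ∏ i, (1 + x i ^ 2) ≤ (1 + ∑ i, x i ^ 2) ^ d := calc
    _ ≤ ∏ _i : Fin d, (1 + ∑ j, x j ^ 2) :=
      Finset.prod_le_prod (fun i _ => by positivity) fun i _ => by
        gcongr; exact Finset.single_le_sum (fun j _ => sq_nonneg (x j)) (Finset.mem_univ i)
    _ = (1 + ∑ i, x i ^ 2) ^ d := by simp
  calc (1 + ∑ i, x i ^ 2) ^ p = ((1 + ∑ i, x i ^ 2) ^ d) ^ (p / d) := by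
        rw [← Real.rpow_natCast, ← Real.rpow_mul (by positivity), mul_div_cancel₀ _ (by positivity)]
    _ ≤ (∏ i, (1 + x i ^ 2)) ^ (p / d) :=
        Real.rpow_le_rpow_of_nonpos (by positivity) hprod
          (div_nonpos_of_nonpos_of_nonneg hp d.cast_nonneg)
    _ = ∏ i, (1 + x i ^ 2) ^ (p / d) := (Real.finsetProd_rpow _ _ (fun i _ => by positivity) _).symm

theorem summable_one_add_sum_sq_rpow {d : ℕ} {p : ℝ} (hp : p < -(d / 2)) :
    Summable fun k : Fin d → ℤ => (1 + ∑ i, (k i : ℝ) ^ 2) ^ p := by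
  rcases Nat.eq_zero_or_pos d with rfl | hd
  · exact .of_finite
  have hd' : (0 : ℝ) < d := by exact_mod_cast hd
  have hq : p / d < -(1 / 2) := by
    rw [div_lt_iff₀ hd']; linarith
  refine Summable.of_nonneg_of_le (fun k => by positivity)
    (fun k => one_add_sum_sq_rpow_le_prod hd (by linarith) _)
    (summable_fin_pi_prod_of_nonneg (summable_one_add_sq_rpow hq) (fun n => by positivity) d)

theorem lintegral_ofReal_sq_gaussianReal (v : ℝ≥0) :
    ∫⁻ x, ENNReal.ofReal (x ^ 2) ∂gaussianReal 0 v = v := by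
  have h := evariance_eq_lintegral_ofReal id (gaussianReal 0 v)
  rw [← ofReal_variance (memLp_id_gaussianReal 2), variance_id_gaussianReal] at h
  simpa using h.symm

section MapEqGaussianReal

variable {Ω : Type*} [MeasurableSpace Ω] {μ : Measure Ω} {X : Ω → ℝ}

theorem aemeasurable_of_map_eq_gaussianReal {m : ℝ} {v : ℝ≥0} (hX : μ.map X = gaussianReal m v) :
    AEMeasurable X μ :=
  aemeasurable_of_map_neZero (by rw [hX]; infer_instance)

theorem lintegral_ofReal_sq_of_map_eq_gaussianReal {v : ℝ≥0} (hX : μ.map X = gaussianReal 0 v) :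
    ∫⁻ ω, ENNReal.ofReal (X ω ^ 2) ∂μ = v := by
  rw [← lintegral_ofReal_sq_gaussianReal, ← hX,
    lintegral_map' (by fun_prop) (aemeasurable_of_map_eq_gaussianReal hX)]

end MapEqGaussianReal

theorem ae_summable_of_lintegral_le {Ω ι : Type*} [MeasurableSpace Ω] [Countable ι]
    {μ : Measure Ω} {X : ι → Ω → ℝ} {c : ι → ℝ} (hX₀ : ∀ k ω, 0 ≤ X k ω)
    (hX : ∀ k, AEMeasurable (X k) μ)
    (hle : ∀ k, ∫⁻ ω, ENNReal.ofReal (X k ω) ∂μ ≤ ENNReal.ofReal (c k))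
    (hc : Summable c) : ∀ᵐ ω ∂μ, Summable fun k => X k ω := by
  have hXm : ∀ k, AEMeasurable (fun ω => ENNReal.ofReal (X k ω)) μ := fun k => (hX k).ennreal_ofReal
  have htsum : ∫⁻ ω, ∑' k, ENNReal.ofReal (X k ω) ∂μ ≠ ∞ := by
    rw [lintegral_tsum hXm]
    exact ne_top_of_le_ne_top (ENNReal.tsum_coe_ne_top_iff_summable.mpr hc.toNNReal)
      (ENNReal.tsum_le_tsum hle)
  filter_upwards [ae_lt_top' (AEMeasurable.tsum hXm) htsum] with ω hω
  have := NNReal.summable_coe.mpr (ENNReal.tsum_coe_ne_top_iff_summable.mp hω.ne)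
  exact this.congr fun k => Real.coe_toNNReal _ (hX₀ k ω)

theorem heat_solution_in_sobolev_a_s_general (d : ℕ) (σ s : ℝ)
    (hs : s < 1 - (d : ℝ) / 2)
    {Ω : Type*} [MeasurableSpace Ω] (μ : Measure Ω)
    (g : (Fin d → ℤ) → Ω → ℝ)
    (hgauss : ∀ k : Fin d → ℤ, ∃ v : NNReal,
      (v : ℝ) ≤ σ ^ 2 / (2 * (1 + ∑ i, ((k i : ℝ)) ^ 2)) ∧
      μ.map (g k) = gaussianReal 0 v) :
    ∀ᵐ ω ∂μ,
      Summable (fun k : Fin d → ℤ => (1 + ∑ i, ((k i : ℝ)) ^ 2) ^ s * (g k ω) ^ 2) := by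
  choose v hv hmap using hgauss
  set A : (Fin d → ℤ) → ℝ := fun k => 1 + ∑ i, (k i : ℝ) ^ 2
  have hA : ∀ k, 0 < A k := fun k => by positivity
  have hbound : ∀ k, ∫⁻ ω, ENNReal.ofReal (A k ^ s * g k ω ^ 2) ∂μ
      ≤ ENNReal.ofReal (σ ^ 2 / 2 * A k ^ (s - 1)) := fun k => calc
    _ = ENNReal.ofReal (A k ^ s) * v k := by
      simp_rw [ENNReal.ofReal_mul (Real.rpow_nonneg (hA k).le s)]
      rw [lintegral_const_mul' _ _ ENNReal.ofReal_ne_top,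
        lintegral_ofReal_sq_of_map_eq_gaussianReal (hmap k)]
    _ ≤ ENNReal.ofReal (A k ^ s * (σ ^ 2 / (2 * A k))) := by
      rw [ENNReal.ofReal_mul (Real.rpow_nonneg (hA k).le s), ← ENNReal.ofReal_coe_nnreal]
      gcongr
      exact hv k
    _ = ENNReal.ofReal (σ ^ 2 / 2 * A k ^ (s - 1)) := by
      rw [Real.rpow_sub_one (hA k).ne']
      ring_nf
  have hgm : ∀ k, AEMeasurable (g k) μ := fun k => aemeasurable_of_map_eq_gaussianReal (hmap k)
  exact ae_summable_of_lintegral_le (fun k ω => by positivity) (fun k => by fun_prop) hbound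
    ((summable_one_add_sum_sq_rpow (p := s - 1) (by linarith)).mul_left _)

/-- Let `d ≥ 1`, `σ > 0` and `s < 1 − d/2`. If `(g_k)_{k ∈ ℤ^d}` is a
family of independent real centered Gaussian random variables with
`Var(g_k) ≤ σ²/(2(1 + ‖k‖²))` for every `k`, then the random series
`∑_{k ∈ ℤ^d} (1 + ‖k‖²)^s g_k²` is finite almost surely. -/
theorem heat_solution_in_sobolev_a_s (d : ℕ) (hd : 1 ≤ d) (σ s : ℝ) (hσ : 0 < σ)
    (hs : s < 1 - (d : ℝ) / 2)
    {Ω : Type*} [MeasurableSpace Ω] (μ : Measure Ω) [IsProbabilityMeasure μ]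
    (g : (Fin d → ℤ) → Ω → ℝ)
    (hindep : iIndepFun g μ)
    (hgauss : ∀ k : Fin d → ℤ, ∃ v : NNReal,
      (v : ℝ) ≤ σ ^ 2 / (2 * (1 + ∑ i, ((k i : ℝ)) ^ 2)) ∧
      μ.map (g k) = gaussianReal 0 v) :
    ∀ᵐ ω ∂μ,
      Summable (fun k : Fin d → ℤ => (1 + ∑ i, ((k i : ℝ)) ^ 2) ^ s * (g k ω) ^ 2) :=
  heat_solution_in_sobolev_a_s_general d σ s hs μ g hgauss
end

section
/- Let d ≥ 2 be an integer, σ > 0 and t > 0. Let (g_k)_{k ∈ ℤ^d} be independent real centered Gaussian random variables with Var(g_k) = σ²(1 − e^{−2(1+‖k‖²)t})/(2(1 + ‖k‖²)). Then ∑_{k ∈ ℤ^d} g_k² = +∞ almost surely. -/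
/-!
Write `v k` for the variance of `g k`. It is at most `σ² / 2` and at least `C / (1 + ‖k‖²)` with
`C > 0`, and `∑ 1 / (1 + ‖k‖²)` diverges over `ℤ^d` when `d ≥ 2` (already along a quadrant of a
coordinate plane). For a centred Gaussian `X` of variance `v ≤ V`, writing `X = √v Z` and using the
convexity of `exp` in the form `exp (-a y) ≤ 1 - a (1 - exp (-y))` for `a = v / V ∈ [0, 1]` gives
`𝔼 exp (-X²) ≤ exp (-c v)` with `c = c(V) > 0`. By independence,
`𝔼 exp (-∑_{k ∈ s} g_k²) ≤ exp (-c ∑_{k ∈ s} v_k)`, which can be made arbitrarily small by choosing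
the finite set `s`, so Markov's inequality applied to `exp (-∑_{k ∈ s} g_k²)` shows that
`{∑ g_k² ≤ M}` is null for every `M`.
-/

open MeasureTheory ProbabilityTheory Real Finset
open scoped ENNReal NNReal

theorem ENNReal.tsum_ofReal_eq_top_of_not_summable {α : Type*} {f : α → ℝ} (hf₀ : ∀ i, 0 ≤ f i)
    (hf : ¬Summable f) : ∑' i, ENNReal.ofReal (f i) = ∞ := by
  contrapose! hf
  exact (ENNReal.summable_toReal hf).congr fun i => ENNReal.toReal_ofReal (hf₀ i)

theorem tsum_ofReal_inv_one_add_sq_add_sq_eq_top :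
    ∑' p : ℕ × ℕ, ENNReal.ofReal (1 + (p.1 : ℝ) ^ 2 + (p.2 : ℝ) ^ 2)⁻¹ = ∞ := by
  have hrow (n : ℕ) :
      (3 * ((n : ℝ) + 1))⁻¹ ≤ ∑ m ∈ range (n + 1), (1 + (n : ℝ) ^ 2 + (m : ℝ) ^ 2)⁻¹ := by
    calc (3 * ((n : ℝ) + 1))⁻¹ = ∑ m ∈ range (n + 1), (3 * ((n : ℝ) + 1) ^ 2)⁻¹ := by
          simp only [sum_const, card_range, nsmul_eq_mul]
          push_cast
          field_simp
      _ ≤ _ := by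
          refine sum_le_sum fun m hm => inv_anti₀ (by positivity) ?_
          have hmn : (m : ℝ) ≤ n := by exact_mod_cast Nat.lt_succ_iff.mp (mem_range.mp hm)
          nlinarith [(Nat.cast_nonneg m : (0 : ℝ) ≤ m)]
  have hharmonic : ¬Summable fun n : ℕ => (3 * ((n : ℝ) + 1))⁻¹ := by
    intro h
    refine Real.not_summable_natCast_inv ((summable_nat_add_iff 1).mp ?_)
    refine (h.mul_left 3).congr fun n => ?_
    push_cast
    field_simp
  rw [ENNReal.tsum_prod (f := fun n m : ℕ => ENNReal.ofReal (1 + (n : ℝ) ^ 2 + (m : ℝ) ^ 2)⁻¹),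
    ← top_le_iff, ← ENNReal.tsum_ofReal_eq_top_of_not_summable (fun n => by positivity) hharmonic]
  refine ENNReal.tsum_le_tsum fun n => ?_
  calc ENNReal.ofReal (3 * ((n : ℝ) + 1))⁻¹
      ≤ ENNReal.ofReal (∑ m ∈ range (n + 1), (1 + (n : ℝ) ^ 2 + (m : ℝ) ^ 2)⁻¹) :=
        ENNReal.ofReal_le_ofReal (hrow n)
    _ = ∑ m ∈ range (n + 1), ENNReal.ofReal (1 + (n : ℝ) ^ 2 + (m : ℝ) ^ 2)⁻¹ :=
        ENNReal.ofReal_sum_of_nonneg fun m _ => by positivity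
    _ ≤ _ := ENNReal.sum_le_tsum _

theorem tsum_ofReal_inv_one_add_sum_sq_eq_top {d : ℕ} (hd : 2 ≤ d) :
    ∑' k : Fin d → ℤ, ENNReal.ofReal (1 + ∑ i, (k i : ℝ) ^ 2)⁻¹ = ∞ := by
  obtain ⟨d, rfl⟩ : ∃ n, d = n + 2 := ⟨d - 2, by omega⟩
  let φ : ℕ × ℕ → Fin (d + 2) → ℤ := fun p => Fin.cons (p.1 : ℤ) (Fin.cons (p.2 : ℤ) 0)
  have hφ : Function.Injective φ := fun p q h => by
    simpa [φ, Fin.cons_inj, Prod.ext_iff] using h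
  rw [← top_le_iff, ← tsum_ofReal_inv_one_add_sq_add_sq_eq_top]
  refine le_of_eq_of_le (tsum_congr fun p => ?_) (ENNReal.tsum_comp_le_tsum_of_injective hφ _)
  simp [φ, Fin.sum_univ_succ, add_assoc]

theorem Real.exp_neg_mul_le_one_sub_mul {a : ℝ} (ha₀ : 0 ≤ a) (ha₁ : a ≤ 1) (y : ℝ) :
    exp (-(a * y)) ≤ 1 - a * (1 - exp (-y)) := by
  have h := convexOn_exp.2 (Set.mem_univ (-y)) (Set.mem_univ 0) ha₀ (sub_nonneg.2 ha₁)
    (add_sub_cancel a 1)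
  simp only [smul_eq_mul, mul_zero, add_zero, exp_zero, mul_one, mul_neg] at h
  linarith

theorem integrable_exp_neg_of_nonneg {α : Type*} [MeasurableSpace α] {μ : Measure α}
    [IsFiniteMeasure μ] {f : α → ℝ} (hf : AEStronglyMeasurable f μ) (hf₀ : ∀ x, 0 ≤ f x) :
    Integrable (fun x => exp (-f x)) μ :=
  .of_bound (continuous_exp.comp_aestronglyMeasurable hf.neg) 1 (ae_of_all _ fun x => by
    rw [norm_of_nonneg (exp_pos _).le, exp_le_one_iff, neg_nonpos]
    exact hf₀ x)

theorem integral_exp_neg_mul_sq_gaussianReal_lt_one {b : ℝ} (hb : 0 < b) :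
    ∫ z, exp (-(b * z ^ 2)) ∂gaussianReal 0 1 < 1 := by
  have hint : Integrable (fun z : ℝ => exp (-(b * z ^ 2))) (gaussianReal 0 1) :=
    integrable_exp_neg_of_nonneg (by fun_prop) fun z => by positivity
  have hsupport : Function.support (fun z : ℝ => 1 - exp (-(b * z ^ 2))) = {0}ᶜ := by
    ext z
    simp [sub_eq_zero, eq_comm (a := (1 : ℝ)), hb.ne']
  have : NullSingletonClass (gaussianReal 0 1) := nullSingletonClass_gaussianReal one_ne_zero
  have hint' : Integrable (fun z : ℝ => 1 - exp (-(b * z ^ 2))) (gaussianReal 0 1) :=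
    (integrable_const 1).sub hint
  have hpos : 0 < ∫ z, (1 - exp (-(b * z ^ 2))) ∂gaussianReal 0 1 := by
    rw [integral_pos_iff_support_of_nonneg (fun z => ?_) hint',
      hsupport, measure_compl (measurableSet_singleton 0) (measure_ne_top _ _)]
    · simp
    · simp only [Pi.zero_apply, sub_nonneg, exp_le_one_iff, neg_nonpos]
      positivity
  rw [integral_sub (integrable_const 1) hint] at hpos
  simpa using hpos

theorem exists_integral_exp_neg_sq_gaussianReal_le {V : ℝ} (hV : 0 < V) :
    ∃ c > 0, ∀ v : ℝ≥0, (v : ℝ) ≤ V →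
      ∫ x, exp (-x ^ 2) ∂gaussianReal 0 v ≤ exp (-(c * v)) := by
  set κ := 1 - ∫ z, exp (-(V * z ^ 2)) ∂gaussianReal 0 1
  have hκ : 0 < κ := sub_pos.2 (integral_exp_neg_mul_sq_gaussianReal_lt_one hV)
  refine ⟨κ / V, div_pos hκ hV, fun v hv => ?_⟩
  have hscale : gaussianReal 0 v = (gaussianReal 0 1).map (√(v : ℝ) * ·) := by
    rw [gaussianReal_map_const_mul]
    congr
    · simp
    · ext; simp
  have hint : Integrable (fun z : ℝ => exp (-(V * z ^ 2))) (gaussianReal 0 1) :=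
    integrable_exp_neg_of_nonneg (by fun_prop) fun z => by positivity
  have hint' : Integrable (fun z : ℝ => v / V * (1 - exp (-(V * z ^ 2)))) (gaussianReal 0 1) :=
    ((integrable_const 1).sub hint).const_mul _
  have hvV : 0 ≤ (v : ℝ) / V ∧ (v : ℝ) / V ≤ 1 :=
    ⟨by positivity, (div_le_one hV).2 hv⟩
  calc ∫ x, exp (-x ^ 2) ∂gaussianReal 0 v
      = ∫ z, exp (-((v / V) * (V * z ^ 2))) ∂gaussianReal 0 1 := by
        rw [hscale, integral_map (by fun_prop) (by fun_prop)]
        congr with z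
        rw [mul_pow, sq_sqrt v.coe_nonneg]
        field_simp
    _ ≤ ∫ z, (1 - (v / V) * (1 - exp (-(V * z ^ 2)))) ∂gaussianReal 0 1 :=
        integral_mono (integrable_exp_neg_of_nonneg (by fun_prop) fun z => by positivity)
          ((integrable_const 1).sub hint')
          fun z => exp_neg_mul_le_one_sub_mul hvV.1 hvV.2 _
    _ = 1 - κ / V * v := by
        rw [integral_sub (integrable_const 1) hint', integral_const_mul,
          integral_sub (integrable_const 1) hint]
        simp only [integral_const, probReal_univ, smul_eq_mul, one_mul, κ]
        ring
    _ ≤ exp (-(κ / V * v)) := by linarith [add_one_le_exp (-(κ / V * v))]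

theorem ProbabilityTheory.iIndepFun.integral_finset_prod_comp {ι Ω 𝓧 : Type*} [MeasurableSpace Ω]
    {μ : Measure Ω} [MeasurableSpace 𝓧] {X : ι → Ω → 𝓧} {f : ι → 𝓧 → ℝ} (hX : iIndepFun X μ)
    (hXm : ∀ i, AEMeasurable (X i) μ) (hf : ∀ i, AEStronglyMeasurable (f i) (μ.map (X i)))
    (s : Finset ι) :
    ∫ ω, ∏ i ∈ s, f i (X i ω) ∂μ = ∏ i ∈ s, ∫ ω, f i (X i ω) ∂μ := by
  simp only [← prod_coe_sort s]
  exact (hX.precomp Subtype.val_injective).integral_fun_prod_comp (f := fun i : s => f i)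
    (fun i => hXm i) fun i => hf i

section Chernoff

variable {ι Ω : Type*} [MeasurableSpace Ω] {μ : Measure Ω} [IsProbabilityMeasure μ]
  {X : ι → Ω → ℝ}

theorem measureReal_tsum_sq_le_le (hX : iIndepFun X μ) (hXm : ∀ i, AEMeasurable (X i) μ)
    (M : ℝ≥0) (s : Finset ι) :
    μ.real {ω | ∑' i, ENNReal.ofReal (X i ω ^ 2) ≤ M} ≤
      exp M * ∏ i ∈ s, ∫ ω, exp (-X i ω ^ 2) ∂μ := by
  set P : Ω → ℝ := fun ω => ∏ i ∈ s, exp (-X i ω ^ 2)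
  have hsub : {ω | ∑' i, ENNReal.ofReal (X i ω ^ 2) ≤ M} ⊆ {ω | exp (-M) ≤ P ω} := by
    intro ω hω
    have hsum : ∑ i ∈ s, X i ω ^ 2 ≤ M := by
      rw [← ENNReal.ofReal_le_ofReal_iff M.coe_nonneg, ENNReal.ofReal_coe_nnreal,
        ENNReal.ofReal_sum_of_nonneg fun i _ => sq_nonneg _]
      exact (ENNReal.sum_le_tsum s).trans hω
    simp only [Set.mem_ofPred_eq, P, ← exp_sum, sum_neg_distrib]
    exact exp_le_exp.2 (neg_le_neg hsum)
  have hP : Integrable P μ :=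
    .of_bound (Finset.aestronglyMeasurable_fun_prod s fun i _ => by fun_prop) 1
      (ae_of_all _ fun ω => by
        rw [norm_of_nonneg (prod_nonneg fun i _ => (exp_pos _).le)]
        exact prod_le_one (fun i _ => (exp_pos _).le) fun i _ =>
          exp_le_one_iff.2 (neg_nonpos.2 (sq_nonneg _)))
  have hmarkov := mul_meas_ge_le_integral_of_nonneg
    (ae_of_all _ fun ω => prod_nonneg fun i _ => (exp_pos _).le) hP (exp (-M))
  rw [hX.integral_finset_prod_comp (f := fun _ x => exp (-x ^ 2)) hXm (fun i => by fun_prop) s]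
    at hmarkov
  calc μ.real {ω | ∑' i, ENNReal.ofReal (X i ω ^ 2) ≤ M} ≤ μ.real {ω | exp (-M) ≤ P ω} :=
        measureReal_mono hsub
    _ = exp M * (exp (-M) * μ.real {ω | exp (-M) ≤ P ω}) := by
        rw [← mul_assoc, ← exp_add, add_neg_cancel, exp_zero, one_mul]
    _ ≤ exp M * ∏ i ∈ s, ∫ ω, exp (-X i ω ^ 2) ∂μ := by gcongr

theorem ae_tsum_sq_eq_top_of_forall_exists_prod_le (hX : iIndepFun X μ)
    (hXm : ∀ i, AEMeasurable (X i) μ)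
    (h : ∀ ε > 0, ∃ s : Finset ι, ∏ i ∈ s, ∫ ω, exp (-X i ω ^ 2) ∂μ ≤ ε) :
    ∀ᵐ ω ∂μ, ∑' i, ENNReal.ofReal (X i ω ^ 2) = ∞ := by
  have hnull (M : ℕ) : μ {ω | ∑' i, ENNReal.ofReal (X i ω ^ 2) ≤ (M : ℝ≥0)} = 0 := by
    rw [← measureReal_eq_zero_iff]
    refine le_antisymm (le_of_forall_pos_le_add fun ε hε => ?_) measureReal_nonneg
    obtain ⟨s, hs⟩ := h (exp (-M) * ε) (by positivity)
    calc _ ≤ exp M * ∏ i ∈ s, ∫ ω, exp (-X i ω ^ 2) ∂μ := measureReal_tsum_sq_le_le hX hXm M s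
      _ ≤ exp M * (exp (-M) * ε) := mul_le_mul_of_nonneg_left hs (exp_pos _).le
      _ = 0 + ε := by rw [← mul_assoc, ← exp_add]; simp
  rw [ae_iff]
  refine measure_mono_null (fun ω hω => ?_) (measure_iUnion_null hnull)
  obtain ⟨M, hM⟩ := ENNReal.exists_nat_gt hω
  exact Set.mem_iUnion.2 ⟨M, by simpa using hM.le⟩

theorem exists_finset_prod_le_of_tsum_eq_top {a : ι → ℝ} {v : ι → ℝ≥0} {c : ℝ} (hc : 0 < c)
    (ha₀ : ∀ i, 0 ≤ a i) (ha : ∀ i, a i ≤ exp (-(c * v i))) (hv : ∑' i, (v i : ℝ≥0∞) = ∞)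
    {ε : ℝ} (hε : 0 < ε) : ∃ s : Finset ι, ∏ i ∈ s, a i ≤ ε := by
  have hlt : ((-log ε / c).toNNReal : ℝ≥0∞) < ⨆ s : Finset ι, ∑ i ∈ s, (v i : ℝ≥0∞) := by
    rw [← ENNReal.tsum_eq_iSup_sum, hv]
    exact ENNReal.coe_lt_top
  obtain ⟨s, hs⟩ := lt_iSup_iff.1 hlt
  rw [← ENNReal.ofNNReal_finsetSum, ENNReal.coe_lt_coe, ← NNReal.coe_lt_coe, NNReal.coe_sum] at hs
  have hlog : -log ε ≤ c * ∑ i ∈ s, (v i : ℝ) := by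
    rw [← div_le_iff₀' hc]
    exact (le_coe_toNNReal _).trans hs.le
  refine ⟨s, ?_⟩
  calc ∏ i ∈ s, a i ≤ ∏ i ∈ s, exp (-(c * v i)) := prod_le_prod (fun i _ => ha₀ i) fun i _ => ha i
    _ = exp (-(c * ∑ i ∈ s, (v i : ℝ))) := by rw [← exp_sum, mul_sum, sum_neg_distrib]
    _ ≤ exp (log ε) := exp_le_exp.2 (by linarith)
    _ = ε := exp_log hε

end Chernoff

theorem ae_tsum_sq_eq_top_of_iIndepFun_gaussianReal {ι Ω : Type*} [MeasurableSpace Ω]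
    {μ : Measure Ω} [IsProbabilityMeasure μ] {X : ι → Ω → ℝ} (hX : iIndepFun X μ)
    {v : ι → ℝ≥0} (hXv : ∀ i, μ.map (X i) = gaussianReal 0 (v i)) {V : ℝ}
    (hvV : ∀ i, (v i : ℝ) ≤ V) (hv : ∑' i, (v i : ℝ≥0∞) = ∞) :
    ∀ᵐ ω ∂μ, ∑' i, ENNReal.ofReal (X i ω ^ 2) = ∞ := by
  have hXm (i : ι) : AEMeasurable (X i) μ :=
    aemeasurable_of_map_neZero (by rw [hXv i]; infer_instance)
  obtain ⟨c, hc, hlaplace⟩ :=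
    exists_integral_exp_neg_sq_gaussianReal_le (lt_max_of_lt_right one_pos : 0 < max V 1)
  refine ae_tsum_sq_eq_top_of_forall_exists_prod_le hX hXm fun ε hε =>
    exists_finset_prod_le_of_tsum_eq_top hc (fun i => integral_nonneg fun _ => (exp_pos _).le)
      (fun i => ?_) hv hε
  rw [← integral_map (f := fun x => exp (-x ^ 2)) (hXm i) (by fun_prop), hXv i]
  exact hlaplace (v i) ((hvV i).trans (le_max_left _ _))

theorem heat_variance_le (σ t : ℝ) {a : ℝ} (ha : 1 ≤ a) :
    σ ^ 2 * (1 - exp (-2 * a * t)) / (2 * a) ≤ σ ^ 2 / 2 := by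
  rw [div_le_div_iff₀ (by positivity) two_pos]
  nlinarith [exp_pos (-2 * a * t), sq_nonneg σ]

theorem le_heat_variance (σ : ℝ) {t a : ℝ} (ht : 0 ≤ t) (ha : 1 ≤ a) :
    σ ^ 2 * (1 - exp (-2 * t)) / 2 * a⁻¹ ≤ σ ^ 2 * (1 - exp (-2 * a * t)) / (2 * a) := by
  have hexp : exp (-2 * a * t) ≤ exp (-2 * t) := exp_le_exp.2 (by nlinarith)
  have ha₀ : 0 ≤ 2 * a := by linarith
  calc σ ^ 2 * (1 - exp (-2 * t)) / 2 * a⁻¹ = σ ^ 2 * (1 - exp (-2 * t)) / (2 * a) := by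
        field_simp
    _ ≤ _ := by gcongr

/-- Let `d ≥ 2`, `σ > 0`, `t > 0`. If `(g_k)_{k ∈ ℤ^d}` are independent
real centered Gaussian random variables with
`Var(g_k) = σ²(1 − e^{−2(1+‖k‖²)t})/(2(1 + ‖k‖²))`, then `∑_{k ∈ ℤ^d} g_k² = +∞`
almost surely. -/
theorem heat_solution_not_L2_a_s (d : ℕ) (hd : 2 ≤ d) (σ t : ℝ) (hσ : 0 < σ) (ht : 0 < t)
    {Ω : Type*} [MeasurableSpace Ω] (μ : Measure Ω) [IsProbabilityMeasure μ]
    (g : (Fin d → ℤ) → Ω → ℝ)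
    (hindep : iIndepFun g μ)
    (hgauss : ∀ k : Fin d → ℤ, ∃ v : NNReal,
      (v : ℝ) = σ ^ 2 * (1 - Real.exp (-2 * (1 + ∑ i, ((k i : ℝ)) ^ 2) * t)) /
        (2 * (1 + ∑ i, ((k i : ℝ)) ^ 2)) ∧
      μ.map (g k) = gaussianReal 0 v) :
    ∀ᵐ ω ∂μ, ∑' k : Fin d → ℤ, ENNReal.ofReal ((g k ω) ^ 2) = ⊤ := by
  choose v hv hmap using hgauss
  have hone (k : Fin d → ℤ) : 1 ≤ 1 + ∑ i, (k i : ℝ) ^ 2 := le_add_of_nonneg_right (by positivity)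
  set C := σ ^ 2 * (1 - exp (-2 * t)) / 2
  have hC : 0 < C :=
    div_pos (mul_pos (pow_pos hσ 2) (sub_pos.2 (exp_lt_one_iff.2 (by linarith)))) two_pos
  have hdiv : ∑' k : Fin d → ℤ, ENNReal.ofReal (C * (1 + ∑ i, (k i : ℝ) ^ 2)⁻¹) = ∞ := by
    simp_rw [ENNReal.ofReal_mul hC.le]
    rw [ENNReal.tsum_mul_left, tsum_ofReal_inv_one_add_sum_sq_eq_top hd,
      ENNReal.mul_top (ENNReal.ofReal_pos.2 hC).ne']
  refine ae_tsum_sq_eq_top_of_iIndepFun_gaussianReal hindep hmap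
    (fun k => (hv k).trans_le (heat_variance_le σ t (hone k))) (eq_top_mono ?_ hdiv)
  refine ENNReal.tsum_le_tsum fun k => ?_
  rw [← ENNReal.ofReal_coe_nnreal, hv k]
  exact ENNReal.ofReal_le_ofReal (le_heat_variance σ ht.le (hone k))
end

section
/- Define R(c) = (∫₀^∞ x² e^{−c(x²−1)²} dx) / (∫₀^∞ e^{−c(x²−1)²} dx) for c > 0. Then there exist constants 0 < a ≤ A such that a·c^{−1/2} ≤ R(c) ≤ A·c^{−1/2} for all c ∈ (0, 1]. In particular R(c) → ∞ at rate c^{−1/2} as c → 0⁺. -/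
/-!
Substituting `x = y / c^{1/4}` turns the two integrals into `c^{-3/4} J₂(√c)` and
`c^{-1/4} J₀(√c)`, where `Jₙ(b) = ∫₀^∞ yⁿ e^{-(y²-b)²} dy`, so that
`R(c) = c^{-1/2} J₂(√c) / J₀(√c)` and it suffices to bound `Jₙ(b)` above and below uniformly in
`b ∈ [0, 1]`. From below, on `(0, 1]` the exponent is at least `-1`; from above,
`(y² - b)² ≥ y² - 2` gives the Gaussian majorant `e² yⁿ e^{-y²}`.
-/

open MeasureTheory Set Real

noncomputable def quarticMoment (n : ℕ) (b : ℝ) : ℝ :=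
  ∫ y in Ioi 0, y ^ n * exp (-(y ^ 2 - b) ^ 2)

lemma integrableOn_pow_mul_exp_neg_sq (n : ℕ) :
    IntegrableOn (fun y : ℝ => y ^ n * exp (-y ^ 2)) (Ioi 0) := by
  simpa using integrableOn_rpow_mul_exp_neg_mul_sq one_pos
    (by linarith [n.cast_nonneg (α := ℝ)] : (-1 : ℝ) < n)

lemma pow_mul_exp_quartic_le {b : ℝ} (hb : b ≤ 1) (n : ℕ) {y : ℝ} (hy : 0 ≤ y) :
    ‖y ^ n * exp (-(y ^ 2 - b) ^ 2)‖ ≤ exp 2 * (y ^ n * exp (-y ^ 2)) := by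
  have hexp : exp (-(y ^ 2 - b) ^ 2) ≤ exp 2 * exp (-y ^ 2) := by
    rw [← exp_add]
    exact exp_le_exp.2 (by nlinarith [sq_nonneg (y ^ 2 - b - 1 / 2)])
  rw [norm_of_nonneg (by positivity), mul_left_comm]
  exact mul_le_mul_of_nonneg_left hexp (by positivity)

lemma integrableOn_pow_mul_exp_quartic {b : ℝ} (hb : b ≤ 1) (n : ℕ) :
    IntegrableOn (fun y : ℝ => y ^ n * exp (-(y ^ 2 - b) ^ 2)) (Ioi 0) := by
  refine ((integrableOn_pow_mul_exp_neg_sq n).const_mul (exp 2)).mono'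
    (by fun_prop) ?_
  filter_upwards [ae_restrict_mem measurableSet_Ioi] with y hy
  exact pow_mul_exp_quartic_le hb n (le_of_lt hy)

lemma quarticMoment_le {b : ℝ} (hb : b ≤ 1) (n : ℕ) :
    quarticMoment n b ≤ exp 2 * ∫ y in Ioi 0, y ^ n * exp (-y ^ 2) := by
  rw [← integral_const_mul]
  refine setIntegral_mono_on (integrableOn_pow_mul_exp_quartic hb n)
    ((integrableOn_pow_mul_exp_neg_sq n).const_mul _) measurableSet_Ioi fun y hy => ?_
  exact (le_norm_self _).trans (pow_mul_exp_quartic_le hb n (le_of_lt hy))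

lemma exp_neg_one_div_le_quarticMoment {b : ℝ} (hb₀ : 0 ≤ b) (hb₁ : b ≤ 1) (n : ℕ) :
    exp (-1) / (n + 1) ≤ quarticMoment n b := by
  have hint := integrableOn_pow_mul_exp_quartic hb₁ n
  calc exp (-1) / (n + 1) = ∫ y in Ioc 0 1, exp (-1) * y ^ n := by
        rw [integral_const_mul, ← intervalIntegral.integral_of_le zero_le_one, integral_pow]
        simp [div_eq_mul_inv]
    _ ≤ ∫ y in Ioc 0 1, y ^ n * exp (-(y ^ 2 - b) ^ 2) := by
        refine setIntegral_mono_on (continuous_const.mul (continuous_pow n)).integrableOn_Ioc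
          (hint.mono_set Ioc_subset_Ioi_self) measurableSet_Ioc fun y ⟨hy₀, hy₁⟩ => ?_
        rw [mul_comm]
        refine mul_le_mul_of_nonneg_left (exp_le_exp.2 ?_) (by positivity)
        have hy₂ : y ^ 2 ≤ 1 := pow_le_one₀ hy₀.le hy₁
        nlinarith [sq_nonneg y]
    _ ≤ quarticMoment n b :=
        setIntegral_mono_set hint (ae_restrict_of_forall_mem measurableSet_Ioi
          fun y (hy : 0 < y) => by positivity) Ioc_subset_Ioi_self.eventuallyLE

lemma setIntegral_pow_mul_exp_quartic (n : ℕ) {s : ℝ} (hs : 0 < s) :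
    ∫ x in Ioi 0, x ^ n * exp (-s ^ 4 * (x ^ 2 - 1) ^ 2) =
      quarticMoment n (s ^ 2) / s ^ (n + 1) := by
  have hscale := integral_comp_mul_left_Ioi (fun y => y ^ n * exp (-(y ^ 2 - s ^ 2) ^ 2)) 0 hs
  simp only [mul_zero, smul_eq_mul] at hscale
  calc ∫ x in Ioi 0, x ^ n * exp (-s ^ 4 * (x ^ 2 - 1) ^ 2)
      = ∫ x in Ioi 0, (s ^ n)⁻¹ * ((s * x) ^ n * exp (-((s * x) ^ 2 - s ^ 2) ^ 2)) := by
        congr 1; ext x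
        field_simp
        ring_nf
    _ = quarticMoment n (s ^ 2) / s ^ (n + 1) := by
        rw [integral_const_mul, hscale, quarticMoment]
        field_simp
        ring

lemma exists_quarticMoment_bounds (n : ℕ) : ∃ L U : ℝ, 0 < L ∧ ∀ b ∈ Icc (0 : ℝ) 1,
    L ≤ quarticMoment n b ∧ quarticMoment n b ≤ U :=
  ⟨_, _, by positivity,
    fun _ hb => ⟨exp_neg_one_div_le_quarticMoment hb.1 hb.2 n, quarticMoment_le hb.2 n⟩⟩

lemma exists_quarticMoment_ratio_bounds : ∃ a A : ℝ, 0 < a ∧ ∀ b ∈ Icc (0 : ℝ) 1,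
    a ≤ quarticMoment 2 b / quarticMoment 0 b ∧ quarticMoment 2 b / quarticMoment 0 b ≤ A := by
  obtain ⟨L₂, U₂, hL₂, h₂⟩ := exists_quarticMoment_bounds 2
  obtain ⟨L₀, U₀, hL₀, h₀⟩ := exists_quarticMoment_bounds 0
  have hU₀ : 0 < U₀ := by
    obtain ⟨hl, hu⟩ := h₀ 0 ⟨le_rfl, zero_le_one⟩
    exact hL₀.trans_le (hl.trans hu)
  refine ⟨L₂ / U₀, U₂ / L₀, by positivity, fun b hb => ?_⟩
  obtain ⟨hl₂, hu₂⟩ := h₂ b hb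
  obtain ⟨hl₀, hu₀⟩ := h₀ b hb
  exact ⟨div_le_div₀ (hL₂.le.trans hl₂) hl₂ (hL₀.trans_le hl₀) hu₀,
    div_le_div₀ (hL₂.le.trans (hl₂.trans hu₂)) hu₂ hL₀ hl₀⟩

lemma secondMoment_ratio_eq {s : ℝ} (hs : 0 < s) :
    (∫ x in Ioi (0 : ℝ), x ^ 2 * exp (-s ^ 4 * (x ^ 2 - 1) ^ 2)) /
        (∫ x in Ioi (0 : ℝ), exp (-s ^ 4 * (x ^ 2 - 1) ^ 2)) =
      quarticMoment 2 (s ^ 2) / quarticMoment 0 (s ^ 2) * (s ^ 2)⁻¹ := by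
  have h₀ : ∫ x in Ioi (0 : ℝ), exp (-s ^ 4 * (x ^ 2 - 1) ^ 2) = quarticMoment 0 (s ^ 2) / s := by
    simpa using setIntegral_pow_mul_exp_quartic 0 hs
  rw [setIntegral_pow_mul_exp_quartic 2 hs, h₀]
  field_simp
  ring

/-- For
`R(c) = (∫₀^∞ x² e^{−c(x²−1)²} dx) / (∫₀^∞ e^{−c(x²−1)²} dx)` (`c > 0`), there are
constants `0 < a ≤ A` such that `a c^{−1/2} ≤ R(c) ≤ A c^{−1/2}` for all `c ∈ (0, 1]`;
in particular `R(c) → ∞` at rate `c^{−1/2}` as `c → 0⁺`. -/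
theorem second_moment_growth_rate :
    ∃ a A : ℝ, 0 < a ∧ a ≤ A ∧ ∀ c ∈ Set.Ioc (0 : ℝ) 1,
      a * c ^ (-(1 : ℝ) / 2) ≤
        (∫ x in Set.Ioi (0 : ℝ), x ^ 2 * Real.exp (-c * (x ^ 2 - 1) ^ 2)) /
          (∫ x in Set.Ioi (0 : ℝ), Real.exp (-c * (x ^ 2 - 1) ^ 2)) ∧
      (∫ x in Set.Ioi (0 : ℝ), x ^ 2 * Real.exp (-c * (x ^ 2 - 1) ^ 2)) /
          (∫ x in Set.Ioi (0 : ℝ), Real.exp (-c * (x ^ 2 - 1) ^ 2)) ≤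
        A * c ^ (-(1 : ℝ) / 2) := by
  obtain ⟨a, A, ha, hratio⟩ := exists_quarticMoment_ratio_bounds
  have hratio_one := hratio 1 ⟨zero_le_one, le_rfl⟩
  refine ⟨a, A, ha, hratio_one.1.trans hratio_one.2, fun c ⟨hc₀, hc₁⟩ => ?_⟩
  obtain ⟨s, hs₀, hs₁, rfl⟩ : ∃ s : ℝ, 0 < s ∧ s ≤ 1 ∧ c = s ^ 4 :=
    ⟨c ^ (1 / 4 : ℝ), by positivity, rpow_le_one hc₀.le hc₁ (by norm_num), by
      rw [← rpow_natCast, ← rpow_mul hc₀.le]; norm_num⟩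
  have hpow : (s ^ 4) ^ (-(1 : ℝ) / 2) = (s ^ 2)⁻¹ := by
    rw [← rpow_natCast, ← rpow_mul hs₀.le, ← rpow_natCast, ← rpow_neg hs₀.le]
    norm_num
  obtain ⟨hlower, hupper⟩ := hratio (s ^ 2) ⟨by positivity, pow_le_one₀ hs₀.le hs₁⟩
  rw [hpow, secondMoment_ratio_eq hs₀]
  exact ⟨mul_le_mul_of_nonneg_right hlower (by positivity),
    mul_le_mul_of_nonneg_right hupper (by positivity)⟩
end

section
/- Let d ≥ 1, σ > 0, and V(x) = x⁴/4 − x²/2. For each even integer N ≥ 2 let ρ = N²/(4π²) and let (X_j^{(N)}), indexed by j with j_i ∈ {−N/2,…,N/2−1}, be i.i.d. real random variables with probability density proportional to exp(−2V(x)/(σ² ρ^{d/2})). Then for every continuous function φ : 𝕋^d → ℝ, the pairing ⟨u_N, φ⟩ := (2π/N)^d ∑_j X_j^{(N)} φ(x_j), where x_j = (2π/N)j, converges to 0 in probability as N → ∞. -/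
/-!
With `T = σ² (N / 2π)^d`, the `X_j` are independent, centred (the density is even) and, since the
quartic confinement gives `exp (-2V(x)/T) ≤ e² exp (-x²/√T)` for `T ≥ 1`, have variance
`O(T^{3/4})`. Hence the pairing has variance at most
`N^d (2π/N)^{2d} ‖φ‖²_∞ O(T^{3/4}) = O(T^{-1/4})`, because `(2π/N)^d T = σ²`, and Chebyshev's
inequality concludes as `T → ∞`.
-/

open MeasureTheory ProbabilityTheory Filter

/-- The grid of indices `j = (j₁,…,j_d)` with `jᵢ ∈ {−N/2, …, N/2 − 1}`. -/
noncomputable def dftGrid (d N : ℕ) : Finset (Fin d → ℤ) :=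
  Fintype.piFinset fun _ : Fin d => Finset.Icc (-((N : ℤ) / 2)) ((N : ℤ) / 2 - 1)

/-- The double-well potential `V(x) = x⁴/4 − x²/2`. -/
noncomputable def doubleWell (x : ℝ) : ℝ := x ^ 4 / 4 - x ^ 2 / 2

/-- `ρ = N²/(4π²)`, the inverse squared grid spacing. -/
noncomputable def rhoGrid (N : ℕ) : ℝ := (N : ℝ) ^ 2 / (4 * Real.pi ^ 2)

/-- The unnormalized stationary density `exp(−2V(x)/(σ²ρ^{d/2}))` of the decoupled
stochastic Allen–Cahn equation at one grid point. -/
noncomputable def stationaryDensity (d N : ℕ) (σ : ℝ) (x : ℝ) : ℝ :=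
  Real.exp (-2 * doubleWell x / (σ ^ 2 * rhoGrid N ^ ((d : ℝ) / 2)))

open Real

noncomputable def gibbsDensity (T x : ℝ) : ℝ := exp (-2 * doubleWell x / T)

noncomputable def gibbsMeasure (T : ℝ) : Measure ℝ :=
  volume.withDensity fun x => ENNReal.ofReal (gibbsDensity T x / ∫ y, gibbsDensity T y)

section Gibbs

variable {T : ℝ}

lemma continuous_gibbsDensity (T : ℝ) : Continuous (gibbsDensity T) := by
  unfold gibbsDensity doubleWell
  fun_prop

lemma gibbsDensity_pos (T x : ℝ) : 0 < gibbsDensity T x := exp_pos _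

lemma gibbsDensity_neg (T x : ℝ) : gibbsDensity T (-x) = gibbsDensity T x := by
  unfold gibbsDensity doubleWell
  ring_nf

lemma neg_two_mul_doubleWell_div_sq_le {s : ℝ} (hs : 1 ≤ s) (x : ℝ) :
    -2 * doubleWell x / s ^ 2 ≤ 2 - x ^ 2 / s := by
  have h : (2 - x ^ 2 / s) * s ^ 2 = 2 * s ^ 2 - x ^ 2 * s := by field_simp
  rw [div_le_iff₀ (by positivity), h]
  unfold doubleWell
  nlinarith [sq_nonneg (x ^ 2 - 1 - s), mul_nonneg (by linarith : 0 ≤ 3 * s + 1) (sub_nonneg.2 hs)]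

lemma gibbsDensity_le (hT : 1 ≤ T) (x : ℝ) :
    gibbsDensity T x ≤ exp 2 * exp (-(√T)⁻¹ * x ^ 2) := by
  have h := neg_two_mul_doubleWell_div_sq_le (one_le_sqrt.2 hT) x
  rw [sq_sqrt (by linarith)] at h
  rw [gibbsDensity, ← exp_add]
  exact exp_le_exp.2 (by linarith [show x ^ 2 / √T = (√T)⁻¹ * x ^ 2 by ring])

lemma sq_mul_gibbsDensity_le (hT : 1 ≤ T) (x : ℝ) :
    x ^ 2 * gibbsDensity T x ≤ exp 2 * √T * exp (-(2 * √T)⁻¹ * x ^ 2) := by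
  have hs : 0 < √T := sqrt_pos.2 (by linarith)
  have hexp : ∀ t : ℝ, 0 ≤ t → t ≤ exp (t / 2) := fun t ht => by
    nlinarith [quadratic_le_exp_of_nonneg (x := t / 2) (by positivity), sq_nonneg (t - 2)]
  calc x ^ 2 * gibbsDensity T x = √T * (x ^ 2 / √T) * gibbsDensity T x := by field_simp
    _ ≤ √T * exp (x ^ 2 / √T / 2) * (exp 2 * exp (-(√T)⁻¹ * x ^ 2)) :=
        mul_le_mul (mul_le_mul_of_nonneg_left (hexp _ (by positivity)) hs.le)
          (gibbsDensity_le hT x) (gibbsDensity_pos T x).le (by positivity)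
    _ = exp 2 * √T * exp (x ^ 2 / √T / 2 + -(√T)⁻¹ * x ^ 2) := by rw [exp_add]; ring
    _ = exp 2 * √T * exp (-(2 * √T)⁻¹ * x ^ 2) := by congr 2; field_simp; ring

lemma integrable_gibbsDensity (hT : 1 ≤ T) : Integrable (gibbsDensity T) := by
  have hs : 0 < √T := sqrt_pos.2 (by linarith)
  refine ((integrable_exp_neg_mul_sq (inv_pos.2 hs)).const_mul (exp 2)).mono'
    (continuous_gibbsDensity T).aestronglyMeasurable (ae_of_all _ fun x => ?_)
  rw [norm_of_nonneg (gibbsDensity_pos T x).le]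
  exact gibbsDensity_le hT x

lemma integrable_sq_mul_gibbsDensity (hT : 1 ≤ T) :
    Integrable fun x => x ^ 2 * gibbsDensity T x := by
  have hs : 0 < √T := sqrt_pos.2 (by linarith)
  refine ((integrable_exp_neg_mul_sq (by positivity : 0 < (2 * √T)⁻¹)).const_mul
    (exp 2 * √T)).mono' ((continuous_pow 2).mul (continuous_gibbsDensity T)).aestronglyMeasurable
    (ae_of_all _ fun x => ?_)
  rw [norm_of_nonneg (by positivity [(gibbsDensity_pos T x).le])]
  exact sq_mul_gibbsDensity_le hT x

lemma integral_sq_mul_gibbsDensity_le (hT : 1 ≤ T) :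
    ∫ x, x ^ 2 * gibbsDensity T x ≤ exp 2 * √(2 * π) * T ^ (3 / 4 : ℝ) := by
  have hT0 : 0 ≤ T := by linarith
  calc ∫ x, x ^ 2 * gibbsDensity T x
      ≤ ∫ x, exp 2 * √T * exp (-(2 * √T)⁻¹ * x ^ 2) :=
        integral_mono (integrable_sq_mul_gibbsDensity hT)
          ((integrable_exp_neg_mul_sq (by positivity)).const_mul _) (sq_mul_gibbsDensity_le hT)
    _ = exp 2 * (√T * √(2 * π * √T)) := by
        rw [integral_const_mul, integral_gaussian, div_inv_eq_mul]; ring_nf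
    _ = exp 2 * √(2 * π) * T ^ (3 / 4 : ℝ) := by
        rw [show (3 / 4 : ℝ) = 1 / 2 + 1 / 2 * (1 / 2) by norm_num, rpow_add' hT0 (by norm_num),
          rpow_mul hT0]
        simp only [← sqrt_eq_rpow]
        rw [sqrt_mul (by positivity)]
        ring

lemma two_le_integral_gibbsDensity (hT : 1 ≤ T) : 2 ≤ ∫ x, gibbsDensity T x := by
  have hone : ∀ x ∈ Set.Icc (-1 : ℝ) 1, 1 ≤ gibbsDensity T x := fun x ⟨hx₁, hx₂⟩ => by
    refine one_le_exp (div_nonneg ?_ (by linarith))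
    have : x ^ 2 ≤ 1 := by nlinarith
    unfold doubleWell
    nlinarith [mul_nonneg (sq_nonneg x) (sub_nonneg.2 this)]
  calc (2 : ℝ) = ∫ _ in Set.Icc (-1 : ℝ) 1, 1 := by simp; norm_num
    _ ≤ ∫ x in Set.Icc (-1 : ℝ) 1, gibbsDensity T x :=
        setIntegral_mono_on (integrableOn_const (by simp)) (integrable_gibbsDensity hT).integrableOn
          measurableSet_Icc hone
    _ ≤ ∫ x, gibbsDensity T x :=
        setIntegral_le_integral (integrable_gibbsDensity hT)
          (ae_of_all _ fun x => (gibbsDensity_pos T x).le)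

lemma integral_mul_gibbsDensity_eq_zero (T : ℝ) : ∫ x, x * gibbsDensity T x = 0 := by
  have h := integral_neg_eq_self (fun x => x * gibbsDensity T x) volume
  simp only [gibbsDensity_neg, neg_mul, integral_neg] at h
  linarith

lemma integral_gibbsMeasure (T : ℝ) (f : ℝ → ℝ) :
    ∫ x, f x ∂gibbsMeasure T = (∫ y, gibbsDensity T y)⁻¹ * ∫ x, gibbsDensity T x * f x := by
  have hZ : 0 ≤ ∫ y, gibbsDensity T y := integral_nonneg fun y => (gibbsDensity_pos T y).le
  rw [gibbsMeasure, integral_withDensity_eq_integral_toReal_smul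
    ((continuous_gibbsDensity T).measurable.div_const _).ennreal_ofReal
    (ae_of_all _ fun _ => ENNReal.ofReal_lt_top), ← integral_const_mul]
  congr 1 with x
  rw [ENNReal.toReal_ofReal (div_nonneg (gibbsDensity_pos T x).le hZ), smul_eq_mul]
  ring

lemma memLp_id_gibbsMeasure (hT : 1 ≤ T) : MemLp id 2 (gibbsMeasure T) := by
  refine (memLp_two_iff_integrable_sq aestronglyMeasurable_id).2 ?_
  rw [gibbsMeasure, integrable_withDensity_iff_integrable_smul'
    ((continuous_gibbsDensity T).measurable.div_const _).ennreal_ofReal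
    (ae_of_all _ fun _ => ENNReal.ofReal_lt_top)]
  refine ((integrable_sq_mul_gibbsDensity hT).div_const (∫ y, gibbsDensity T y)).congr
    (ae_of_all _ fun x => ?_)
  have hZ : 0 ≤ ∫ y, gibbsDensity T y := integral_nonneg fun y => (gibbsDensity_pos T y).le
  simp only [id, smul_eq_mul, ENNReal.toReal_ofReal (div_nonneg (gibbsDensity_pos T x).le hZ)]
  ring

lemma integral_id_gibbsMeasure (T : ℝ) : ∫ x, x ∂gibbsMeasure T = 0 := by
  simp_rw [integral_gibbsMeasure, mul_comm (gibbsDensity T _), integral_mul_gibbsDensity_eq_zero,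
    mul_zero]

lemma integral_sq_gibbsMeasure_le (hT : 1 ≤ T) :
    ∫ x, x ^ 2 ∂gibbsMeasure T ≤ exp 2 * √(2 * π) * T ^ (3 / 4 : ℝ) / 2 := by
  have hZ := two_le_integral_gibbsDensity hT
  rw [integral_gibbsMeasure, inv_mul_eq_div]
  simp_rw [mul_comm (gibbsDensity T _)]
  calc (∫ x, x ^ 2 * gibbsDensity T x) / ∫ y, gibbsDensity T y
      ≤ (exp 2 * √(2 * π) * T ^ (3 / 4 : ℝ)) / ∫ y, gibbsDensity T y :=
        div_le_div_of_nonneg_right (integral_sq_mul_gibbsDensity_le hT) (by linarith)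
    _ ≤ exp 2 * √(2 * π) * T ^ (3 / 4 : ℝ) / 2 :=
        div_le_div_of_nonneg_left (by positivity) two_pos hZ

variable {Ω : Type*} [MeasurableSpace Ω] {μ : Measure Ω} {X : Ω → ℝ}

lemma memLp_two_of_map_eq_gibbsMeasure (hX : AEMeasurable X μ) (hlaw : μ.map X = gibbsMeasure T)
    (hT : 1 ≤ T) : MemLp X 2 μ :=
  (memLp_map_measure_iff aestronglyMeasurable_id hX).1 (hlaw ▸ memLp_id_gibbsMeasure hT)

lemma integral_eq_zero_of_map_eq_gibbsMeasure (hX : AEMeasurable X μ)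
    (hlaw : μ.map X = gibbsMeasure T) : μ[X] = 0 := by
  rw [← integral_id_gibbsMeasure T, ← hlaw]
  exact (integral_map hX aestronglyMeasurable_id).symm

lemma variance_le_of_map_eq_gibbsMeasure (hX : AEMeasurable X μ)
    (hlaw : μ.map X = gibbsMeasure T) (hT : 1 ≤ T) :
    variance X μ ≤ exp 2 * √(2 * π) * T ^ (3 / 4 : ℝ) / 2 := by
  rw [variance_of_integral_eq_zero hX (integral_eq_zero_of_map_eq_gibbsMeasure hX hlaw),
    ← integral_map hX (continuous_pow 2).aestronglyMeasurable, hlaw]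
  exact integral_sq_gibbsMeasure_le hT

end Gibbs

section Chebyshev

variable {Ω : Type*} [MeasurableSpace Ω] {μ : Measure Ω} [IsFiniteMeasure μ]

theorem measure_abs_sum_mul_ge_le {ι : Type*} [Fintype ι] {X : ι → Ω → ℝ}
    (hX : ∀ i, MemLp (X i) 2 μ) (hindep : Pairwise fun i j => IndepFun (X i) (X j) μ)
    (hmean : ∀ i, μ[X i] = 0) {M : ℝ} (hvar : ∀ i, variance (X i) μ ≤ M) (a : ι → ℝ)
    {ε : ℝ} (hε : 0 < ε) :
    μ {ω | ε ≤ |∑ i, a i * X i ω|} ≤ ENNReal.ofReal ((∑ i, a i ^ 2) * M / ε ^ 2) := by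
  set Y : ι → Ω → ℝ := fun i ω => a i * X i ω
  have hY : ∀ i, MemLp (Y i) 2 μ := fun i => (hX i).const_mul (a i)
  have hsum : ∀ ω, ∑ i, a i * X i ω = (∑ i, Y i) ω := fun ω => by simp [Y]
  have hmeanS : μ[∑ i, Y i] = 0 := by
    simp [integral_finsetSum _ fun i _ => (hY i).integrable one_le_two, Y, integral_const_mul,
      hmean]
  have hvarS : variance (∑ i, Y i) μ ≤ (∑ i, a i ^ 2) * M := by
    rw [IndepFun.variance_sum (fun i _ => hY i) fun i _ j _ hij =>
      (hindep hij).comp (measurable_const_mul (a i)) (measurable_const_mul (a j)), Finset.sum_mul]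
    exact Finset.sum_le_sum fun i _ => by
      simpa only [Y, variance_const_mul] using mul_le_mul_of_nonneg_left (hvar i) (sq_nonneg _)
  calc μ {ω | ε ≤ |∑ i, a i * X i ω|} = μ {ω | ε ≤ |(∑ i, Y i) ω - μ[∑ i, Y i]|} := by
        simp_rw [hmeanS, sub_zero, hsum]
    _ ≤ ENNReal.ofReal (variance (∑ i, Y i) μ / ε ^ 2) :=
        meas_ge_le_variance_div_sq (memLp_finsetSum' _ fun i _ => hY i) hε
    _ ≤ ENNReal.ofReal ((∑ i, a i ^ 2) * M / ε ^ 2) := by gcongr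

end Chebyshev

noncomputable def gridPoint {d : ℕ} (N : ℕ) (j : Fin d → ℤ) : Fin d → ℝ :=
  fun i => 2 * π / N * j i

lemma abs_two_pi_div_mul_le_pi {N : ℕ} {k : ℤ}
    (hk : k ∈ Finset.Icc (-((N : ℤ) / 2)) ((N : ℤ) / 2 - 1)) : |2 * π / N * k| ≤ π := by
  obtain ⟨hlo, hhi⟩ := Finset.mem_Icc.1 hk
  have hk' : |(2 * k : ℝ)| ≤ N := abs_le.2
    ⟨by exact_mod_cast (by omega : -(N : ℤ) ≤ 2 * k),
      by exact_mod_cast (by omega : 2 * k ≤ (N : ℤ))⟩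
  rcases N.eq_zero_or_pos with rfl | hN
  · simp [pi_pos.le]
  rw [show 2 * π / N * k = π * (2 * k / N) by ring, abs_mul, abs_of_pos pi_pos, abs_div,
    Nat.abs_cast]
  exact mul_le_of_le_one_right pi_pos.le ((div_le_one (by positivity)).2 hk')

lemma gridPoint_mem_Icc {d N : ℕ} {j : Fin d → ℤ} (hj : j ∈ dftGrid d N) :
    gridPoint N j ∈ Set.Icc (fun _ => -π) (fun _ => π) :=
  ⟨fun i => (abs_le.1 (abs_two_pi_div_mul_le_pi (Fintype.mem_piFinset.1 hj i))).1,
    fun i => (abs_le.1 (abs_two_pi_div_mul_le_pi (Fintype.mem_piFinset.1 hj i))).2⟩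

lemma card_dftGrid_le (d N : ℕ) : (dftGrid d N).card ≤ N ^ d := by
  rw [dftGrid, Fintype.card_piFinset, Finset.prod_const, Finset.card_univ, Fintype.card_fin,
    Int.card_Icc]
  exact Nat.pow_le_pow_left (by omega) d

lemma rhoGrid_rpow (d N : ℕ) : rhoGrid N ^ ((d : ℝ) / 2) = (N / (2 * π)) ^ d := by
  rw [show rhoGrid N = (N / (2 * π)) ^ 2 by unfold rhoGrid; ring, ← rpow_natCast _ 2,
    ← rpow_mul (by positivity), show ((2 : ℕ) : ℝ) * (d / 2) = d by push_cast; ring, rpow_natCast]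

lemma stationaryDensity_eq_gibbsDensity (d N : ℕ) (σ : ℝ) :
    stationaryDensity d N σ = gibbsDensity (σ ^ 2 * (N / (2 * π)) ^ d) := by
  rw [← rhoGrid_rpow]
  rfl

theorem measure_abs_gridPairing_ge_le {Ω : Type*} [MeasurableSpace Ω] {μ : Measure Ω}
    [IsFiniteMeasure μ] {d N : ℕ} (hN : N ≠ 0) {σ : ℝ} (hT : 1 ≤ σ ^ 2 * (N / (2 * π)) ^ d)
    {X : dftGrid d N → Ω → ℝ} (hmeas : ∀ j, Measurable (X j)) (hindep : iIndepFun X μ)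
    (hlaw : ∀ j, μ.map (X j) = gibbsMeasure (σ ^ 2 * (N / (2 * π)) ^ d))
    {φ : (Fin d → ℝ) → ℝ} {C : ℝ} (hC : ∀ x ∈ Set.Icc (fun _ => -π) (fun _ => π), ‖φ x‖ ≤ C)
    {ε : ℝ} (hε : 0 < ε) :
    μ {ω | ε ≤ |(2 * π / N) ^ d * ∑ j : dftGrid d N, X j ω * φ (gridPoint N j)|} ≤
      ENNReal.ofReal ((2 * π) ^ d * C ^ 2 * σ ^ 2 * (exp 2 * √(2 * π) / 2) *
        (σ ^ 2 * (N / (2 * π)) ^ d) ^ (-(1 / 4) : ℝ) / ε ^ 2) := by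
  set T := σ ^ 2 * (N / (2 * π)) ^ d
  set h := 2 * π / N
  set M := exp 2 * √(2 * π) * T ^ (3 / 4 : ℝ) / 2
  have hT0 : 0 < T := by linarith
  have hweights :
      ∑ j : dftGrid d N, (h ^ d * φ (gridPoint N j)) ^ 2 ≤ N ^ d * (h ^ d * C) ^ 2 := by
    calc ∑ j : dftGrid d N, (h ^ d * φ (gridPoint N j)) ^ 2
        ≤ ∑ _j : dftGrid d N, (h ^ d * C) ^ 2 := by
          refine Finset.sum_le_sum fun j _ => ?_
          obtain ⟨hlo, hhi⟩ := abs_le.1 (Real.norm_eq_abs _ ▸ hC _ (gridPoint_mem_Icc j.2))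
          rw [mul_pow, mul_pow]
          exact mul_le_mul_of_nonneg_left (sq_le_sq' hlo hhi) (sq_nonneg _)
      _ = (dftGrid d N).card * (h ^ d * C) ^ 2 := by simp
      _ ≤ N ^ d * (h ^ d * C) ^ 2 := by
          gcongr
          exact_mod_cast card_dftGrid_le d N
  have hbound : N ^ d * (h ^ d * C) ^ 2 * M =
      (2 * π) ^ d * C ^ 2 * σ ^ 2 * (exp 2 * √(2 * π) / 2) * T ^ (-(1 / 4) : ℝ) := by
    have hhT : h ^ d * T = σ ^ 2 := by
      have hinv : 2 * π / N * (N / (2 * π)) = 1 := by field_simp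
      rw [mul_left_comm, ← mul_pow, hinv, one_pow, mul_one]
    have hNh : (N : ℝ) ^ d * h ^ d = (2 * π) ^ d := by
      simp only [h]; rw [← mul_pow]; field_simp
    simp only [M]
    rw [show (3 / 4 : ℝ) = 1 + -(1 / 4) by norm_num, rpow_add hT0, rpow_one]
    calc (N : ℝ) ^ d * (h ^ d * C) ^ 2 * (exp 2 * √(2 * π) * (T * T ^ (-(1 / 4) : ℝ)) / 2)
        = (N ^ d * h ^ d) * (h ^ d * T) * C ^ 2 * (exp 2 * √(2 * π) / 2) *
            T ^ (-(1 / 4) : ℝ) := by ring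
      _ = _ := by rw [hNh, hhT]; ring
  calc μ {ω | ε ≤ |(2 * π / N) ^ d * ∑ j : dftGrid d N, X j ω * φ (gridPoint N j)|}
      = μ {ω | ε ≤ |∑ j : dftGrid d N, h ^ d * φ (gridPoint N j) * X j ω|} := by
        simp_rw [Finset.mul_sum, ← mul_assoc, mul_right_comm _ (X _ _)]
        rfl
    _ ≤ ENNReal.ofReal ((∑ j : dftGrid d N, (h ^ d * φ (gridPoint N j)) ^ 2) * M / ε ^ 2) :=
        measure_abs_sum_mul_ge_le
          (fun j => memLp_two_of_map_eq_gibbsMeasure (hmeas j).aemeasurable (hlaw j) hT)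
          (fun i j hij => hindep.indepFun hij)
          (fun j => integral_eq_zero_of_map_eq_gibbsMeasure (hmeas j).aemeasurable (hlaw j))
          (fun j => variance_le_of_map_eq_gibbsMeasure (hmeas j).aemeasurable (hlaw j) hT) _ hε
    _ ≤ ENNReal.ofReal (N ^ d * (h ^ d * C) ^ 2 * M / ε ^ 2) := by gcongr
    _ = _ := by rw [hbound]

theorem decoupled_allen_cahn_converges_to_zero_distribution_general
    (d : ℕ) (hd : 1 ≤ d) (σ : ℝ) (hσ : 0 < σ)
    {Ω : Type*} [MeasurableSpace Ω] (μ : Measure Ω) [IsProbabilityMeasure μ]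
    (X : (N : ℕ) → dftGrid d N → Ω → ℝ)
    (hmeas : ∀ N, ∀ j : dftGrid d N, Measurable (X N j))
    (hindep : ∀ N : ℕ, Even N → 2 ≤ N → iIndepFun (X N) μ)
    (hdist : ∀ N : ℕ, Even N → 2 ≤ N → ∀ j : dftGrid d N,
      μ.map (X N j) = volume.withDensity (fun x => ENNReal.ofReal
        (stationaryDensity d N σ x / ∫ y : ℝ, stationaryDensity d N σ y)))
    (φ : (Fin d → ℝ) → ℝ) (hφ : Continuous φ) :
    TendstoInMeasure μ
      (fun (N : ℕ) (ω : Ω) => (2 * Real.pi / N) ^ d *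
        ∑ j : dftGrid d N, X N j ω *
          φ (fun i => 2 * Real.pi / N * ((j : Fin d → ℤ) i : ℝ)))
      (atTop ⊓ Filter.principal {N | Even N ∧ 2 ≤ N})
      (fun _ => 0) := by
  obtain ⟨C, hC⟩ := (isCompact_Icc (a := fun _ : Fin d => -π) (b := fun _ => π))
    |>.exists_bound_of_continuousOn hφ.continuousOn
  set T : ℕ → ℝ := fun N => σ ^ 2 * (N / (2 * π)) ^ d
  have hT : Tendsto T atTop atTop :=
    ((tendsto_pow_atTop (by omega)).comp
      (tendsto_natCast_atTop_atTop.atTop_div_const (by positivity))).const_mul_atTop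
      (by positivity)
  simp_rw [stationaryDensity_eq_gibbsDensity] at hdist
  rw [tendstoInMeasure_iff_dist]
  intro ε hε
  have hlim := ENNReal.tendsto_ofReal
    ((((tendsto_rpow_neg_atTop (by norm_num : (0 : ℝ) < 1 / 4)).comp hT).const_mul
      ((2 * π) ^ d * C ^ 2 * σ ^ 2 * (exp 2 * √(2 * π) / 2))).div_const (ε ^ 2))
  rw [mul_zero, zero_div, ENNReal.ofReal_zero] at hlim
  refine tendsto_of_tendsto_of_tendsto_of_le_of_le' tendsto_const_nhds (hlim.mono_left inf_le_left)
    (Eventually.of_forall fun _ => zero_le) ?_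
  filter_upwards [(hT.eventually_ge_atTop 1).filter_mono inf_le_left,
    mem_inf_of_right (mem_principal_self _)] with N hTN ⟨hNe, hN2⟩
  simp only [Real.dist_eq, sub_zero]
  exact measure_abs_gridPairing_ge_le (by omega) hTN (hmeas N) (hindep N hNe hN2) (hdist N hNe hN2)
    hC hε

/-- Corollary 4.1 of the paper.  Let `d ≥ 1`, `σ > 0`,
`V(x) = x⁴/4 − x²/2`.  For each even `N ≥ 2` let `(X_j^{(N)})`, indexed by the grid
`{−N/2,…,N/2−1}^d`, be i.i.d. real random variables with density proportional to
`exp(−2V(x)/(σ²ρ^{d/2}))`, `ρ = N²/(4π²)`.  Then for every continuous (`2π`-periodic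
in each coordinate) test function `φ : 𝕋^d → ℝ`, the pairing
`⟨u_N, φ⟩ = (2π/N)^d ∑_j X_j^{(N)} φ(x_j)` with `x_j = (2π/N) j` converges to `0` in
probability as `N → ∞` through even `N ≥ 2`. -/
theorem decoupled_allen_cahn_converges_to_zero_distribution
    (d : ℕ) (hd : 1 ≤ d) (σ : ℝ) (hσ : 0 < σ)
    {Ω : Type*} [MeasurableSpace Ω] (μ : Measure Ω) [IsProbabilityMeasure μ]
    (X : (N : ℕ) → dftGrid d N → Ω → ℝ)
    (hmeas : ∀ N, ∀ j : dftGrid d N, Measurable (X N j))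
    (hindep : ∀ N : ℕ, Even N → 2 ≤ N → iIndepFun (X N) μ)
    (hdist : ∀ N : ℕ, Even N → 2 ≤ N → ∀ j : dftGrid d N,
      μ.map (X N j) = volume.withDensity (fun x => ENNReal.ofReal
        (stationaryDensity d N σ x / ∫ y : ℝ, stationaryDensity d N σ y)))
    (φ : (Fin d → ℝ) → ℝ) (hφ : Continuous φ)
    (hper : ∀ (x : Fin d → ℝ) (i : Fin d),
      φ (Function.update x i (x i + 2 * Real.pi)) = φ x) :
    TendstoInMeasure μ
      (fun (N : ℕ) (ω : Ω) => (2 * Real.pi / N) ^ d *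
        ∑ j : dftGrid d N, X N j ω *
          φ (fun i => 2 * Real.pi / N * ((j : Fin d → ℤ) i : ℝ)))
      (atTop ⊓ Filter.principal {N | Even N ∧ 2 ≤ N})
      (fun _ => 0) :=
  decoupled_allen_cahn_converges_to_zero_distribution_general d hd σ hσ μ X hmeas hindep hdist φ hφ
end

section
/- Let σ > 0 and let N ≥ 2 be an integer. Then there exists a unique real number C > 1 satisfying C = (3σ²/(8π²)) ∑_{k ∈ ℤ², ‖k‖ ≤ N} 1/(C − 1 + ‖k‖²). -/
/-- The finite set of lattice points `k ∈ ℤ²` with `‖k‖ ≤ N`, i.e. `k₁² + k₂² ≤ N²`. -/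
noncomputable def latticeBall2 (N : ℕ) : Finset (ℤ × ℤ) :=
  (Finset.Icc (-(N : ℤ)) (N : ℤ) ×ˢ Finset.Icc (-(N : ℤ)) (N : ℤ)).filter
    (fun k => k.1 ^ 2 + k.2 ^ 2 ≤ (N : ℤ) ^ 2)

open Finset Set

/-!
Write `A = 3σ²/(8π²)` and `μₖ = ‖k‖² ≥ 0`. On `C > 1` the map `C ↦ A ∑ₖ 1/(C - 1 + μₖ)` is
continuous and decreasing, so `C ↦ C - A ∑ₖ 1/(C - 1 + μₖ)` is strictly increasing: uniqueness.
The zero mode `μ₀ = 0` makes the sum blow up as `C ↓ 1`, while for large `C` it is at most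
`#{k} / (C - 1)`; the intermediate value theorem gives existence.
-/

section FixedPoint

variable {ι : Type*} (s : Finset ι) (μ : ι → ℝ) (c : ℝ)

lemma antitoneOn_sum_one_div_sub_add (hμ : ∀ i ∈ s, 0 ≤ μ i) :
    AntitoneOn (fun x => ∑ i ∈ s, 1 / (x - c + μ i)) (Ioi c) := by
  intro x hx y _ hxy
  refine sum_le_sum fun i hi => one_div_le_one_div_of_le ?_ (by linarith)
  linarith [hμ i hi, mem_Ioi.mp hx]

lemma continuousOn_sum_one_div_sub_add (hμ : ∀ i ∈ s, 0 ≤ μ i) :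
    ContinuousOn (fun x => ∑ i ∈ s, 1 / (x - c + μ i)) (Ioi c) := by
  refine continuousOn_finsetSum s fun i hi => continuousOn_const.div (by fun_prop) ?_
  intro x hx
  linarith [hμ i hi, mem_Ioi.mp hx]

lemma sum_one_div_add_le_card_div (hμ : ∀ i ∈ s, 0 ≤ μ i) {t : ℝ} (ht : 0 < t) :
    ∑ i ∈ s, 1 / (t + μ i) ≤ #s / t := by
  calc ∑ i ∈ s, 1 / (t + μ i) ≤ ∑ _i ∈ s, 1 / t :=
        sum_le_sum fun i hi => one_div_le_one_div_of_le ht (by linarith [hμ i hi])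
    _ = #s / t := by rw [sum_const, nsmul_eq_mul, mul_one_div]

lemma strictMonoOn_sub_mul_sum_one_div_sub_add (hμ : ∀ i ∈ s, 0 ≤ μ i) {A : ℝ} (hA : 0 ≤ A) :
    StrictMonoOn (fun x => x - A * ∑ i ∈ s, 1 / (x - c + μ i)) (Ioi c) := by
  intro x hx y hy hxy
  have := mul_le_mul_of_nonneg_left
    (antitoneOn_sum_one_div_sub_add s μ c hμ hx hy hxy.le) hA
  simp only
  linarith

lemma le_mul_sum_one_div_sub_add (hμ : ∀ i ∈ s, 0 ≤ μ i) {i₀ : ι} (hi₀ : i₀ ∈ s)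
    (hμ₀ : μ i₀ = 0) {A x : ℝ} (hA : 0 ≤ A) (hcx : c < x) (hx : x * (x - c) ≤ A) :
    x ≤ A * ∑ i ∈ s, 1 / (x - c + μ i) := by
  have hsingle : 1 / (x - c + μ i₀) ≤ ∑ i ∈ s, 1 / (x - c + μ i) :=
    single_le_sum (f := fun i => 1 / (x - c + μ i))
      (fun i hi => by have := hμ i hi; have : 0 < x - c := sub_pos.mpr hcx; positivity) hi₀
  calc x ≤ A / (x - c) := by rwa [le_div_iff₀ (sub_pos.mpr hcx)]
    _ = A * (1 / (x - c + μ i₀)) := by rw [hμ₀, add_zero, mul_one_div]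
    _ ≤ A * ∑ i ∈ s, 1 / (x - c + μ i) := mul_le_mul_of_nonneg_left hsingle hA

lemma mul_sum_one_div_sub_add_le (hμ : ∀ i ∈ s, 0 ≤ μ i) {A x : ℝ} (hA : 0 ≤ A)
    (hx : c + 1 ≤ x) : A * ∑ i ∈ s, 1 / (x - c + μ i) ≤ A * #s := by
  have hsum : ∑ i ∈ s, 1 / (x - c + μ i) ≤ #s :=
    (sum_one_div_add_le_card_div s μ hμ (by linarith)).trans
      (div_le_self (by positivity) (by linarith))
  exact mul_le_mul_of_nonneg_left hsum hA

lemma exists_mem_Ioi_eq_mul_sum_one_div_sub_add (hμ : ∀ i ∈ s, 0 ≤ μ i) {i₀ : ι}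
    (hi₀ : i₀ ∈ s) (hμ₀ : μ i₀ = 0) {A : ℝ} (hA : 0 < A) :
    ∃ x ∈ Ioi c, x = A * ∑ i ∈ s, 1 / (x - c + μ i) := by
  set F : ℝ → ℝ := fun x => x - A * ∑ i ∈ s, 1 / (x - c + μ i)
  set δ := min 1 (A / (|c| + 1))
  have hδ : 0 < δ := lt_min one_pos (by positivity)
  have hδ₁ : δ ≤ 1 := min_le_left _ _
  set b := |c| + 1 + A * #s
  have hb : c + 1 ≤ b ∧ A * #s ≤ b := by
    have : 0 ≤ A * #s := by positivity
    constructor <;> linarith [le_abs_self c, abs_nonneg c]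
  have hFa : F (c + δ) ≤ 0 := by
    have hsmall : (c + δ) * (c + δ - c) ≤ A := by
      calc (c + δ) * (c + δ - c) ≤ (|c| + 1) * δ := by
            rw [add_sub_cancel_left]; gcongr; linarith [le_abs_self c]
        _ ≤ (|c| + 1) * (A / (|c| + 1)) := by gcongr; exact min_le_right _ _
        _ = A := mul_div_cancel₀ A (by positivity)
    exact sub_nonpos.mpr
      (le_mul_sum_one_div_sub_add s μ c hμ hi₀ hμ₀ hA.le (by linarith) hsmall)
  have hFb : 0 ≤ F b :=
    sub_nonneg.mpr ((mul_sum_one_div_sub_add_le s μ c hμ hA.le hb.1).trans hb.2)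
  have hcont : ContinuousOn F (Icc (c + δ) b) :=
    (continuousOn_id.sub
      (continuousOn_const.mul (continuousOn_sum_one_div_sub_add s μ c hμ))).mono
      fun x hx => show c < x by linarith [hx.1]
  obtain ⟨x, hx, hFx⟩ := intermediate_value_Icc (by linarith) hcont ⟨hFa, hFb⟩
  exact ⟨x, show c < x by linarith [hx.1], sub_eq_zero.mp hFx⟩

theorem existsUnique_eq_mul_sum_one_div_sub_add (hμ : ∀ i ∈ s, 0 ≤ μ i) {i₀ : ι}
    (hi₀ : i₀ ∈ s) (hμ₀ : μ i₀ = 0) {A : ℝ} (hA : 0 < A) :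
    ∃! x : ℝ, c < x ∧ x = A * ∑ i ∈ s, 1 / (x - c + μ i) := by
  obtain ⟨x, hx, heq⟩ := exists_mem_Ioi_eq_mul_sum_one_div_sub_add s μ c hμ hi₀ hμ₀ hA
  refine ⟨x, ⟨hx, heq⟩, fun y ⟨hy, heqy⟩ => ?_⟩
  refine (strictMonoOn_sub_mul_sum_one_div_sub_add s μ c hμ hA.le).injOn hy hx ?_
  rw [← heqy, ← heq, sub_self, sub_self]

end FixedPoint

lemma zero_mem_latticeBall2 (N : ℕ) : (0 : ℤ × ℤ) ∈ latticeBall2 N := by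
  simp [latticeBall2]

theorem wick_constant_exists_unique_general (σ : ℝ) (hσ : 0 < σ) (N : ℕ) :
    ∃! C : ℝ, 1 < C ∧
      C = 3 * σ ^ 2 / (8 * Real.pi ^ 2) *
        ∑ k ∈ latticeBall2 N, 1 / (C - 1 + ((k.1 : ℝ) ^ 2 + (k.2 : ℝ) ^ 2)) :=
  existsUnique_eq_mul_sum_one_div_sub_add (latticeBall2 N)
    (fun k => (k.1 : ℝ) ^ 2 + (k.2 : ℝ) ^ 2) 1 (fun k _ => by positivity)
    (zero_mem_latticeBall2 N) (by simp) (by positivity)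

/-- For `σ > 0` and an integer `N ≥ 2` there is a unique real `C > 1`
satisfying the Wick renormalization fixed-point equation
`C = (3σ²/(8π²)) ∑_{k ∈ ℤ², ‖k‖ ≤ N} 1/(C − 1 + ‖k‖²)`. -/
theorem wick_constant_exists_unique (σ : ℝ) (hσ : 0 < σ) (N : ℕ) (hN : 2 ≤ N) :
    ∃! C : ℝ, 1 < C ∧
      C = 3 * σ ^ 2 / (8 * Real.pi ^ 2) *
        ∑ k ∈ latticeBall2 N, 1 / (C - 1 + ((k.1 : ℝ) ^ 2 + (k.2 : ℝ) ^ 2)) :=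
  wick_constant_exists_unique_general σ hσ N
end

section
/- Let (C_N)_{N ≥ 2} be any sequence of real numbers with C_N > 1 for all N and C_N → ∞ as N → ∞, and let s < 0. Then ∑_{k ∈ ℤ², ‖k‖ ≤ N} (1 + ‖k‖²)^s / (C_N − 1 + ‖k‖²) → 0 as N → ∞. -/
/-!
Once `C_N ≥ 2` the denominator dominates `1 + ‖k‖²`, so every term is at most
`(1 + ‖k‖²)^(s-1)`, which is summable over `ℤ²` precisely because `s < 0`; for fixed `k` the term
tends to `0` as `C_N → ∞`. Dominated convergence for series then gives the limit of the full
lattice sum, and the sums over the balls `‖k‖ ≤ N` are squeezed between `0` and it.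
-/

open Filter Topology

lemma summable_one_add_int_sq_rpow {t : ℝ} (ht : t < -1 / 2) :
    Summable fun n : ℤ => (1 + (n : ℝ) ^ 2) ^ t := by
  refine (Real.summable_abs_int_rpow (b := -(2 * t)) (by linarith)).of_norm_bounded_eventually ?_
  filter_upwards [eventually_cofinite_ne 0] with n hn
  have hn' : (0 : ℝ) < |(n : ℝ)| := abs_pos.mpr (Int.cast_ne_zero.mpr hn)
  rw [Real.norm_of_nonneg (by positivity), neg_neg, Real.rpow_mul hn'.le, Real.rpow_two, sq_abs]
  exact Real.rpow_le_rpow_of_nonpos (by positivity) (by linarith) (by linarith)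

lemma one_add_add_rpow_le_mul_rpow {x y t : ℝ} (hx : 0 ≤ x) (hy : 0 ≤ y) (ht : t ≤ 0) :
    (1 + (x + y)) ^ t ≤ (1 + x) ^ (t / 2) * (1 + y) ^ (t / 2) := by
  rw [← Real.mul_rpow (by positivity) (by positivity)]
  calc (1 + (x + y)) ^ t = ((1 + (x + y)) ^ 2) ^ (t / 2) := by
        rw [← Real.rpow_two, ← Real.rpow_mul (by positivity)]; ring_nf
    _ ≤ ((1 + x) * (1 + y)) ^ (t / 2) :=
        Real.rpow_le_rpow_of_nonpos (by positivity) (by nlinarith [mul_nonneg hx hy]) (by linarith)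

lemma summable_one_add_sq_add_sq_rpow {t : ℝ} (ht : t < -1) :
    Summable fun k : ℤ × ℤ => (1 + ((k.1 : ℝ) ^ 2 + (k.2 : ℝ) ^ 2)) ^ t := by
  have h := summable_one_add_int_sq_rpow (t := t / 2) (by linarith)
  exact (h.mul_of_nonneg h (fun _ => by positivity) (fun _ => by positivity)).of_nonneg_of_le
    (fun _ => by positivity)
    fun k => one_add_add_rpow_le_mul_rpow (sq_nonneg _) (sq_nonneg _) (by linarith)

lemma div_add_le_div_one_add {w c m : ℝ} (hw : 0 ≤ w) (hm : 0 ≤ m) (hc : 1 ≤ c) :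
    w / (c + m) ≤ w / (1 + m) :=
  div_le_div_of_nonneg_left hw (by linarith) (by linarith)

section

variable {ι β : Type*} {l : Filter ι} {w m : β → ℝ} {c : ι → ℝ}

lemma tendsto_tsum_div_add_of_tendsto_atTop (hw : ∀ k, 0 ≤ w k) (hm : ∀ k, 0 ≤ m k)
    (hsum : Summable fun k => w k / (1 + m k)) (hc : Tendsto c l atTop) :
    Tendsto (fun i => ∑' k, w k / (c i + m k)) l (𝓝 0) := by
  have h := tendsto_tsum_of_dominated_convergence (f := fun i k => w k / (c i + m k))
    (g := fun _ => 0) hsum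
    (fun k => tendsto_const_nhds.div_atTop (tendsto_atTop_add_const_right l (m k) hc)) ?_
  · simpa using h
  filter_upwards [hc.eventually_ge_atTop 1] with i hi k
  rw [Real.norm_of_nonneg (div_nonneg (hw k) (by linarith [hm k]))]
  exact div_add_le_div_one_add (hw k) (hm k) hi

lemma tendsto_sum_div_add_of_tendsto_atTop (hw : ∀ k, 0 ≤ w k) (hm : ∀ k, 0 ≤ m k)
    (hsum : Summable fun k => w k / (1 + m k)) (hc : Tendsto c l atTop) (S : ι → Finset β) :
    Tendsto (fun i => ∑ k ∈ S i, w k / (c i + m k)) l (𝓝 0) := by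
  refine squeeze_zero' ?_ ?_ (tendsto_tsum_div_add_of_tendsto_atTop hw hm hsum hc)
  · filter_upwards [hc.eventually_ge_atTop 0] with i hi
    exact Finset.sum_nonneg fun k _ => div_nonneg (hw k) (by linarith [hm k])
  · filter_upwards [hc.eventually_ge_atTop 1] with i hi
    refine Summable.sum_le_tsum _ (fun k _ => div_nonneg (hw k) (by linarith [hm k])) ?_
    exact hsum.of_nonneg_of_le (fun k => div_nonneg (hw k) (by linarith [hm k]))
      fun k => div_add_le_div_one_add (hw k) (hm k) hi

end

theorem renormalized_sobolev_norm_vanishes_general (C : ℕ → ℝ)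
    (hCtop : Filter.Tendsto C Filter.atTop Filter.atTop) (s : ℝ) (hs : s < 0) :
    Filter.Tendsto
      (fun N : ℕ => ∑ k ∈ latticeBall2 N,
        (1 + ((k.1 : ℝ) ^ 2 + (k.2 : ℝ) ^ 2)) ^ s /
          (C N - 1 + ((k.1 : ℝ) ^ 2 + (k.2 : ℝ) ^ 2)))
      Filter.atTop (nhds 0) := by
  have hsum : Summable fun k : ℤ × ℤ =>
      (1 + ((k.1 : ℝ) ^ 2 + (k.2 : ℝ) ^ 2)) ^ s / (1 + ((k.1 : ℝ) ^ 2 + (k.2 : ℝ) ^ 2)) :=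
    (summable_one_add_sq_add_sq_rpow (t := s - 1) (by linarith)).congr fun k =>
      Real.rpow_sub_one (by positivity) s
  have hCsub : Tendsto (fun N => C N - 1) atTop atTop := tendsto_atTop_add_const_right _ _ hCtop
  exact tendsto_sum_div_add_of_tendsto_atTop (fun _ => by positivity) (fun _ => by positivity)
    hsum hCsub latticeBall2

/-- Let `(C_N)_{N ≥ 2}` be any sequence with `C_N > 1` and `C_N → ∞`,
and let `s < 0`.  Then `∑_{k ∈ ℤ², ‖k‖ ≤ N} (1 + ‖k‖²)^s / (C_N − 1 + ‖k‖²) → 0`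
as `N → ∞`. -/
theorem renormalized_sobolev_norm_vanishes (C : ℕ → ℝ) (hC1 : ∀ N, 1 < C N)
    (hCtop : Filter.Tendsto C Filter.atTop Filter.atTop) (s : ℝ) (hs : s < 0) :
    Filter.Tendsto
      (fun N : ℕ => ∑ k ∈ latticeBall2 N,
        (1 + ((k.1 : ℝ) ^ 2 + (k.2 : ℝ) ^ 2)) ^ s /
          (C N - 1 + ((k.1 : ℝ) ^ 2 + (k.2 : ℝ) ^ 2)))
      Filter.atTop (nhds 0) :=
  renormalized_sobolev_norm_vanishes_general C hCtop s hs
end
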